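/- Let X be a Tychonoff (completely regular Hausdorff) space that is not countably compact, and let f₀ ∈ C(X) be the zero function. If {x_n : n ∈ ω} is an infinite subset of X with no accumulation point, then f₀ belongs to the τ_Γ-closure of the set L = {g ∈ C(X) : g(x_n) > 0 for all n ∈ ω}, but f₀ does not belong to the τ_Γ-closure of any countable subset of L. -/

import Mathlib

open TopologicalSpace Set Topology

def graphSet {X Y : Type*} [TopologicalSpace X] [TopologicalSpace Y] (f : C(X, Y)) :
    Set (X × Y) := {p | p.2 = f p.1}

/-- The graph topology `τ_Γ` on `C(X, Y)`, generated by the sets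
`F_G = {f | graph f ⊆ G}` for `G` open in `X × Y`. -/
def graphTopology (X Y : Type*) [TopologicalSpace X] [TopologicalSpace Y] :
    TopologicalSpace C(X, Y) :=
  generateFrom {S | ∃ G : Set (X × Y), IsOpen G ∧ S = {f : C(X, Y) | graphSet f ⊆ G}}

def CountablyCompact (X : Type*) [TopologicalSpace X] : Prop :=
  ∀ U : ℕ → Set X, (∀ n, IsOpen (U n)) → (⋃ n, U n) = Set.univ →
    ∃ t : Finset ℕ, (⋃ n ∈ t, U n) = Set.univ

/-! A neighbourhood of `0` in `τ_Γ` contains some `F_G` with `G ⊇ X × {0}` open.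
Around each `xₙ` the set `G` contains a box `Wₙ × (-εₙ, εₙ)`. Take bumps `φₙ` with `φₙ xₙ = 1`
vanishing off `Wₙ`, and `g = ∑ cₙ φₙ` with weights whose tails satisfy `∑_{m ≥ n} cₘ < εₙ`.
Then `g xₙ > 0`, and if `φₙ` is the first bump not vanishing at `z`, then `z ∈ Wₙ` and
`0 ≤ g z < εₙ`, so the graph of `g` lies in `G`.
Conversely, if `L' = {gₖ}` is countable, the points `(xₖ, gₖ xₖ)` form a closed discrete set
missing the graph of `0` but meeting the graph of every `gₖ`, so its complement defines a
neighbourhood `F_G` of `0` disjoint from `L'`. -/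

section GraphTopology

variable {X Y : Type*} [TopologicalSpace X] [TopologicalSpace Y]

theorem graphSet_subset_iff {f : C(X, Y)} {G : Set (X × Y)} :
    graphSet f ⊆ G ↔ ∀ z, (z, f z) ∈ G :=
  ⟨fun h z => h rfl, fun h p hp => by
    rw [← Prod.mk.eta (p := p), show p.2 = f p.1 from hp]
    exact h p.1⟩

theorem isTopologicalBasis_graphTopology :
    @IsTopologicalBasis C(X, Y) (graphTopology X Y)
      {S | ∃ G : Set (X × Y), IsOpen G ∧ S = {f : C(X, Y) | graphSet f ⊆ G}} := by
  refine @IsTopologicalBasis.mk _ (graphTopology X Y) _ ?_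
    (eq_univ_of_forall fun f => ⟨univ, ⟨univ, isOpen_univ, by simp⟩, trivial⟩) rfl
  rintro _ ⟨G₁, hG₁, rfl⟩ _ ⟨G₂, hG₂, rfl⟩ f hf
  exact ⟨_, ⟨G₁ ∩ G₂, hG₁.inter hG₂, rfl⟩, subset_inter hf.1 hf.2,
    fun g hg => ⟨hg.trans inter_subset_left, hg.trans inter_subset_right⟩⟩

theorem mem_closure_graphTopology_iff {f : C(X, Y)} {S : Set C(X, Y)} :
    f ∈ closure[graphTopology X Y] S ↔
      ∀ G : Set (X × Y), IsOpen G → graphSet f ⊆ G → ∃ g ∈ S, graphSet g ⊆ G := by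
  rw [@IsTopologicalBasis.mem_closure_iff _ (graphTopology X Y) _
    isTopologicalBasis_graphTopology]
  constructor
  · intro h G hG hfG
    obtain ⟨g, hgG, hgS⟩ := h _ ⟨G, hG, rfl⟩ hfG
    exact ⟨g, hgS, hgG⟩
  · rintro h _ ⟨G, hG, rfl⟩ hfG
    obtain ⟨g, hgS, hgG⟩ := h G hG hfG
    exact ⟨g, hgG, hgS⟩

end GraphTopology

theorem exists_pos_summable_tsum_nat_add_lt {ε : ℕ → ℝ} (hε : ∀ n, 0 < ε n) :
    ∃ c : ℕ → ℝ, (∀ n, 0 < c n) ∧ Summable c ∧ ∀ n, ∑' m, c (m + n) < ε n := by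
  let δ n := (Finset.range (n + 1)).inf' Finset.nonempty_range_add_one ε
  have hδε {m n} (h : m ≤ n) : δ n ≤ ε m :=
    Finset.inf'_le _ (Finset.mem_range_succ_iff.2 h)
  have hδ n : 0 < δ n := (Finset.lt_inf'_iff _).2 fun m _ => hε m
  have hc₀ n : 0 < δ n / 2 / 2 / 2 ^ n := by have := hδ n; positivity
  have hc m n : δ (m + n) / 2 / 2 / 2 ^ (m + n) ≤ ε n / 2 / 2 / 2 ^ m := by
    have := hε n
    gcongr
    · exact hδε (Nat.le_add_left n m)
    · exact one_le_two
    · exact Nat.le_add_right m n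
  refine ⟨fun n => δ n / 2 / 2 / 2 ^ n, hc₀,
    (summable_geometric_two' (ε 0 / 2)).of_nonneg_of_le (fun n => (hc₀ n).le) (hc · 0),
    fun n => ?_⟩
  calc ∑' m, δ (m + n) / 2 / 2 / 2 ^ (m + n)
      ≤ ∑' m, ε n / 2 / 2 / 2 ^ m :=
        ((summable_geometric_two' (ε n / 2)).of_nonneg_of_le (fun m => (hc₀ _).le)
          (hc · n)).tsum_le_tsum (hc · n) (summable_geometric_two' _)
    _ = ε n / 2 := tsum_geometric_two' _
    _ < ε n := half_lt_self (hε n)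

theorem tsum_mul_le_tsum_nat_add {c a : ℕ → ℝ} (hc : Summable c) (hc₀ : ∀ m, 0 ≤ c m)
    (ha₀ : ∀ m, 0 ≤ a m) (ha₁ : ∀ m, a m ≤ 1) {n : ℕ} (ha : ∀ m < n, a m = 0) :
    ∑' m, c m * a m ≤ ∑' m, c (m + n) := by
  have hle m : c m * a m ≤ c m := mul_le_of_le_one_right (hc₀ m) (ha₁ m)
  have hca : Summable fun m => c m * a m :=
    hc.of_nonneg_of_le (fun m => mul_nonneg (hc₀ m) (ha₀ m)) hle
  rw [← hca.sum_add_tsum_nat_add n, Finset.sum_eq_zero fun m hm => by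
    rw [ha m (Finset.mem_range.1 hm), mul_zero], zero_add]
  exact ((summable_nat_add_iff n).2 hca).tsum_le_tsum (fun m => hle _)
    ((summable_nat_add_iff n).2 hc)

theorem exists_isOpen_prod_ball_subset {X Y : Type*} [TopologicalSpace X] [PseudoMetricSpace Y]
    {G : Set (X × Y)} (hG : IsOpen G) {a : X} {b : Y} (h : (a, b) ∈ G) :
    ∃ W : Set X, IsOpen W ∧ a ∈ W ∧ ∃ ε > 0, W ×ˢ Metric.ball b ε ⊆ G := by
  obtain ⟨W, V, hW, hV, haW, hbV, hWV⟩ := isOpen_prod_iff.1 hG a b h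
  obtain ⟨ε, hε, hεV⟩ := Metric.isOpen_iff.1 hV b hbV
  exact ⟨W, hW, haW, ε, hε, (prod_mono subset_rfl hεV).trans hWV⟩

theorem exists_graphSet_subset_pos_on_seq {X : Type*} [TopologicalSpace X]
    [CompletelyRegularSpace X] (x : ℕ → X) {G : Set (X × ℝ)} (hG : IsOpen G)
    (h0 : graphSet (0 : C(X, ℝ)) ⊆ G) :
    ∃ g : C(X, ℝ), (∀ n, 0 < g (x n)) ∧ graphSet g ⊆ G := by
  simp only [graphSet_subset_iff, ContinuousMap.zero_apply] at h0
  choose W hW hxW ε hε hWG using fun n => exists_isOpen_prod_ball_subset hG (h0 (x n))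
  choose u hu hux huW using fun n =>
    CompletelyRegularSpace.completely_regular_isOpen (x n) (W n) (hW n) (hxW n)
  let φ n z : ℝ := unitInterval.symm (u n z)
  obtain ⟨c, hc, hcs, hcε⟩ := exists_pos_summable_tsum_nat_add_lt hε
  have hterm n z : ‖c n * φ n z‖ ≤ c n := by
    rw [norm_mul, Real.norm_of_nonneg (hc n).le, Real.norm_of_nonneg unitInterval.nonneg']
    exact mul_le_of_le_one_right (hc n).le unitInterval.le_one'
  have hcont : Continuous fun z => ∑' n, c n * φ n z :=
    continuous_tsum (fun n => continuous_const.mul (by fun_prop)) hcs hterm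
  refine ⟨⟨_, hcont⟩, fun k => ?_, graphSet_subset_iff.2 fun z => ?_⟩
  · calc 0 < c k * φ k (x k) := by simp [φ, hux, hc]
      _ ≤ ∑' n, c n * φ n (x k) :=
        (hcs.of_norm_bounded (hterm · (x k))).le_tsum k fun n _ =>
          mul_nonneg (hc n).le unitInterval.nonneg'
  by_cases hz : ∃ n, φ n z ≠ 0
  · classical
    obtain ⟨n₀, hn₀, hmin⟩ : ∃ n, φ n z ≠ 0 ∧ ∀ m < n, φ m z = 0 :=
      ⟨Nat.find hz, Nat.find_spec hz, fun m hm => not_not.1 (Nat.find_min hz hm)⟩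
    have hzW : z ∈ W n₀ := by
      by_contra h
      exact hn₀ (by simp [φ, show u n₀ z = 1 from huW n₀ h])
    refine hWG n₀ ⟨hzW, ?_⟩
    rw [Metric.mem_ball, dist_zero_right]
    change ‖∑' n, c n * φ n z‖ < _
    rw [Real.norm_of_nonneg (tsum_nonneg fun n => mul_nonneg (hc n).le unitInterval.nonneg')]
    exact (tsum_mul_le_tsum_nat_add hcs (fun n => (hc n).le) (fun n => unitInterval.nonneg')
      (fun n => unitInterval.le_one') hmin).trans_lt (hcε n₀)
  · push Not at hz
    simpa [hz] using h0 z

theorem locallyFinite_singleton_of_injective {X : Type*} [TopologicalSpace X] {x : ℕ → X}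
    (hinj : Function.Injective x) (hacc : ∀ z : X, ∃ U ∈ nhds z, ∀ a ∈ range x, a ∈ U → a = z) :
    LocallyFinite fun k => ({x k} : Set X) := by
  intro z
  obtain ⟨U, hU, hUx⟩ := hacc z
  refine ⟨U, hU, Set.Subsingleton.finite ?_⟩
  rintro k ⟨_, rfl, hk⟩ l ⟨_, rfl, hl⟩
  exact hinj ((hUx _ ⟨k, rfl⟩ hk).trans (hUx _ ⟨l, rfl⟩ hl).symm)

theorem isClosed_range_prod_mk {X Y ι : Type*} [TopologicalSpace X] [TopologicalSpace Y]
    [T1Space X] [T1Space Y] {x : ι → X} (hx : LocallyFinite fun i => ({x i} : Set X))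
    (y : ι → Y) : IsClosed (range fun i => (x i, y i)) := by
  rw [← iUnion_singleton_eq_range]
  simp_rw [← singleton_prod_singleton]
  exact (hx.prod_right _).isClosed_iUnion fun i => isClosed_singleton.prod isClosed_singleton

theorem notMem_closure_range_of_forall_ne {X Y ι : Type*} [TopologicalSpace X] [TopologicalSpace Y]
    [T1Space X] [T1Space Y] {x : ι → X} (hx : LocallyFinite fun i => ({x i} : Set X))
    {f : C(X, Y)} {g : ι → C(X, Y)} (hfg : ∀ i, f (x i) ≠ g i (x i)) :
    f ∉ closure[graphTopology X Y] (range g) := by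
  rw [mem_closure_graphTopology_iff]
  push Not
  refine ⟨_, (isClosed_range_prod_mk hx fun i => g i (x i)).isOpen_compl, ?_, ?_⟩
  · rw [graphSet_subset_iff]
    rintro z ⟨i, hi⟩
    obtain ⟨rfl, hi⟩ := Prod.mk.inj hi
    exact hfg i hi.symm
  · rintro _ ⟨i, rfl⟩ hi
    exact graphSet_subset_iff.1 hi (x i) ⟨i, rfl⟩

theorem zero_mem_closure_not_mem_countable_closure_general (X : Type*) [TopologicalSpace X]
    [T35Space X]
    (x : ℕ → X) (hinj : Function.Injective x)
    (hacc : ∀ z : X, ∃ U ∈ nhds z, ∀ a ∈ Set.range x, a ∈ U → a = z) :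
    (0 : C(X, ℝ)) ∈ @closure C(X, ℝ) (graphTopology X ℝ)
        {g : C(X, ℝ) | ∀ n, 0 < g (x n)} ∧
      ∀ L' ⊆ {g : C(X, ℝ) | ∀ n, 0 < g (x n)}, L'.Countable →
        (0 : C(X, ℝ)) ∉ @closure C(X, ℝ) (graphTopology X ℝ) L' := by
  refine ⟨mem_closure_graphTopology_iff.2 fun G hG h0 =>
    exists_graphSet_subset_pos_on_seq x hG h0, fun L' hL' hcount => ?_⟩
  rcases L'.eq_empty_or_nonempty with rfl | hne
  · simp
  obtain ⟨g, rfl⟩ := hcount.exists_eq_range hne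
  exact notMem_closure_range_of_forall_ne (locallyFinite_singleton_of_injective hinj hacc)
    fun k => (hL' ⟨k, rfl⟩ k).ne

/-- let `X` be Tychonoff and not countably compact, and let
`{xₙ : n ∈ ω}` be an infinite subset of `X` with no accumulation point (i.e. every
point `z` has a neighborhood containing no point of `{xₙ}` other than `z`). Then
the zero function belongs to the `τ_Γ`-closure of
`L = {g ∈ C(X) : g xₙ > 0 for all n}`, but not to the `τ_Γ`-closure of any
countable subset of `L`. -/
theorem zero_mem_closure_not_mem_countable_closure (X : Type*) [TopologicalSpace X]
    [T35Space X] (hX : ¬ CountablyCompact X)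
    (x : ℕ → X) (hinj : Function.Injective x)
    (hacc : ∀ z : X, ∃ U ∈ nhds z, ∀ a ∈ Set.range x, a ∈ U → a = z) :
    (0 : C(X, ℝ)) ∈ @closure C(X, ℝ) (graphTopology X ℝ)
        {g : C(X, ℝ) | ∀ n, 0 < g (x n)} ∧
      ∀ L' ⊆ {g : C(X, ℝ) | ∀ n, 0 < g (x n)}, L'.Countable →
        (0 : C(X, ℝ)) ∉ @closure C(X, ℝ) (graphTopology X ℝ) L' :=
  zero_mem_closure_not_mem_countable_closure_general X x hinj hacc
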